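/- arXiv:1912.09435 — 2 statements merged into one kernel-verified Lean document; each statement's English description precedes it below -/
import Mathlib

section
/- Let n ≥ 1 and let σ : ZMod (2n) → ZMod (2n) be a fixed-point-free involution (the chord-diagram model of the Gauss code of a knot diagram with n crossings, where σ pairs the two occurrences of each crossing). Then the following are equivalent: (i) there exists an alternating labeling f : ZMod (2n) → ZMod 2 (i.e. f (i+1) ≠ f i for all i) such that f (σ i) ≠ f i for every i (the Turaev code is orientable); (ii) for every i, the number (σ i − i).val − 1 of entries strictly between i and σ i is even. (This is the equivalence (i) ⇔ (ii) of Theorem 2.1 of the paper, stating that the Turaev code of a Gauss code is orientable if and only if the two occurrences of each crossing are separated by an even number of entries.) -/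
/-- Theorem 2.1 (i) ⇔ (ii): the Turaev code of a Gauss code (modeled as a
fixed-point-free involution `σ` on `ZMod (2*n)` pairing the two occurrences of
each crossing) is orientable, i.e. admits an alternating labeling
`f : ZMod (2*n) → ZMod 2` with `f (σ i) ≠ f i` for all `i`, if and only if the
two occurrences of every crossing are separated by an even number
`(σ i - i).val - 1` of entries. -/
theorem turaev_code_orientable_iff_even_separation
    (n : ℕ) (hn : 1 ≤ n) (σ : ZMod (2 * n) → ZMod (2 * n))
    (hinv : Function.Involutive σ) (hfix : ∀ i, σ i ≠ i) :
    (∃ f : ZMod (2 * n) → ZMod 2,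
        (∀ i, f (i + 1) ≠ f i) ∧ (∀ i, f (σ i) ≠ f i)) ↔
    (∀ i, Even ((σ i - i).val - 1)) := by
  haveI : NeZero (2 * n) := ⟨by omega⟩
  have hdvd : (2 : ℕ) ∣ 2 * n := Dvd.intro n rfl
  have hself : ∀ m : ℕ, ((m : ZMod 2) + m = 0) := by
    intro m
    rw [← two_mul]
    exact mul_eq_zero_of_left (by decide) _
  have hval_pos : ∀ i, 1 ≤ (σ i - i).val := by
    intro i
    have h : σ i - i ≠ 0 := sub_ne_zero.mpr (hfix i)
    have := (ZMod.val_eq_zero (σ i - i)).not.mpr h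
    omega
  have hkey : ∀ i, σ i = i + (((σ i - i).val : ℕ) : ZMod (2 * n)) := by
    intro i
    rw [ZMod.natCast_val, ZMod.cast_id]
    ring
  constructor
  · rintro ⟨f, halt, horient⟩
    have hstep : ∀ i, f (i + 1) = f i + 1 := by
      intro i
      have := halt i
      revert this
      generalize f (i + 1) = a; generalize f i = b
      revert a b; decide
    have hshift : ∀ k : ℕ, ∀ i, f (i + (k : ZMod (2 * n))) = f i + (k : ZMod 2) := by
      intro k
      induction k with
      | zero => simp
      | succ m ih =>
        intro i
        push_cast
        rw [← add_assoc, hstep, ih, add_assoc]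
    intro i
    have hne := horient i
    rw [hkey i, hshift] at hne
    have hodd : Odd ((σ i - i).val) := by
      rcases Nat.even_or_odd ((σ i - i).val) with he | ho
      · exfalso
        obtain ⟨m, hm⟩ := he
        apply hne
        rw [hm]
        push_cast
        rw [hself m, add_zero]
      · exact ho
    obtain ⟨m, hm⟩ := hodd
    exact ⟨m, by omega⟩
  · intro hsep
    set g := ZMod.castHom hdvd (ZMod 2) with hg
    refine ⟨g, ?_, ?_⟩
    · intro i
      rw [map_add, map_one]
      intro h
      exact one_ne_zero (left_eq_add.mp h.symm)
    · intro i
      have hodd : Odd ((σ i - i).val) := by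
        have h1 := hval_pos i
        obtain ⟨m, hm⟩ := hsep i
        exact ⟨m, by omega⟩
      obtain ⟨m, hm⟩ := hodd
      rw [hkey i, map_add, map_natCast, hm]
      push_cast
      intro h
      have hx : 2 * (m : ZMod 2) + 1 = 0 := left_eq_add.mp h.symm
      rw [show (2 : ZMod 2) = 0 by decide, zero_mul, zero_add] at hx
      exact one_ne_zero hx
end

section
/- Let n, k ≥ 1 and let σ : ZMod (2n) → ZMod (2n) be a fixed-point-free involution such that (σ i − i).val is odd for every i (i.e. the two occurrences of every crossing are separated by an even number of entries on each side). Let s, t : ZMod k → ZMod (2n) satisfy s (i+1) = σ (t i) for all i ∈ ZMod k and t i ≠ s i for all i ∈ ZMod k. Then the sum over i ∈ ZMod k of ((t i − s i).val − 1) is even. (This is the combinatorial core of the proof of (iii) ⇒ (ii) in Theorem 2.1: if every pair of entries of a Gauss code corresponding to a crossing separates an even number of entries, then any closed path through the Turaev ribbon graph — whose i-th segment runs along the code from entry s i to entry t i, turning at each crossing from the occurrence t i to the other occurrence σ (t i) = s (i+1) — passes straight through an even total number Σ b_i of crossings, so its neighborhood is orientable and the Turaev surface is orientable.) -/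
/-- Combinatorial core of (iii) ⇒ (ii) in Theorem 2.1: if in a Gauss code
(modeled as a fixed-point-free involution `σ` on `ZMod (2*n)`) every pair of
occurrences of a crossing separates an even number of entries (i.e.
`(σ i - i).val` is odd for all `i`), then for any closed path through the
Turaev ribbon graph turning at `k` crossings — whose `i`-th segment runs
forward along the code from entry `s i` to entry `t i`, with
`s (i+1) = σ (t i)` and `t i ≠ s i` — the total number
`Σ_i ((t i - s i).val - 1)` of crossings passed straight through is even. -/
theorem closed_path_straight_crossings_even
    (n k : ℕ) (hn : 1 ≤ n) [NeZero k]
    (σ : ZMod (2 * n) → ZMod (2 * n)) (hinv : Function.Involutive σ)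
    (hfix : ∀ i, σ i ≠ i)
    (hodd : ∀ i, Odd ((σ i - i).val))
    (s t : ZMod k → ZMod (2 * n))
    (hturn : ∀ i, s (i + 1) = σ (t i))
    (hne : ∀ i, t i ≠ s i) :
    Even (∑ i : ZMod k, ((t i - s i).val - 1)) := by
  haveI : NeZero (2 * n) := ⟨by omega⟩
  have h2 : (2 : ℕ) ∣ 2 * n := ⟨n, rfl⟩
  set φ : ZMod (2 * n) →+* ZMod 2 := ZMod.castHom h2 (ZMod 2) with hφ
  have hval : ∀ a : ZMod (2 * n), ((a.val : ℕ) : ZMod 2) = φ a := by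
    intro a; rw [ZMod.natCast_val, hφ, ZMod.castHom_apply]
  have hone : ∀ a b : ZMod (2 * n), Odd ((a - b).val) → φ a = φ b + 1 := by
    intro a b h
    obtain ⟨c, hc⟩ := h
    have h' : φ (a - b) = 1 := by
      rw [← hval, hc]; push_cast
      have h2' : (2 : ZMod 2) = 0 := by decide
      rw [h2']; ring
    rw [map_sub] at h'
    linear_combination h'
  rw [even_iff_two_dvd, ← ZMod.natCast_eq_zero_iff, Nat.cast_sum]
  have hterm : ∀ i : ZMod k, (((t i - s i).val - 1 : ℕ) : ZMod 2)
      = φ (t i) + φ (s i) + 1 := by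
    intro i
    have hv : 1 ≤ (t i - s i).val :=
      ZMod.val_pos.mpr (sub_ne_zero.mpr (hne i))
    rw [Nat.cast_sub hv, hval, map_sub]
    have h2' : (2 : ZMod 2) = 0 := by decide
    linear_combination (-φ (s i) - 1) * h2'
  rw [Finset.sum_congr rfl fun i _ => hterm i]
  have hs : ∑ i : ZMod k, φ (s i) = ∑ i : ZMod k, φ (s (i + 1)) :=
    (Fintype.sum_equiv (Equiv.addRight (1 : ZMod k)) _ _ fun i => rfl).symm
  have hst : ∀ i : ZMod k, φ (s (i + 1)) = φ (t i) + 1 := by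
    intro i
    rw [hturn i]
    exact hone _ _ (hodd (t i))
  calc ∑ i : ZMod k, (φ (t i) + φ (s i) + 1)
      = (∑ i : ZMod k, φ (t i)) + (∑ i : ZMod k, φ (s i)) + ∑ i : ZMod k, (1 : ZMod 2) := by
        rw [Finset.sum_add_distrib, Finset.sum_add_distrib]
    _ = (∑ i : ZMod k, φ (t i)) + ((∑ i : ZMod k, φ (t i)) + ∑ i : ZMod k, (1 : ZMod 2))
          + ∑ i : ZMod k, (1 : ZMod 2) := by
        rw [hs, Finset.sum_congr rfl fun i _ => hst i, Finset.sum_add_distrib]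
    _ = 0 := by
        have hx : ∀ x : ZMod 2, x + x = 0 := fun x => CharTwo.add_self_eq_zero x
        linear_combination hx (∑ i : ZMod k, φ (t i)) + hx (∑ i : ZMod k, (1 : ZMod 2))
end
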